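/- Conditional form of Theorem 1 (approximation bound for the KAN-based SCM): let X₀, X₁, …, X_L be a chain of nonempty sets with X_L = ℝ, let f_l, g_l : X_l → X_{l+1} for l = 0, …, L-1, with F = f_{L-1} ∘ ⋯ ∘ f₀ and G = g_{L-1} ∘ ⋯ ∘ g₀, and define the residuals R_l : X₀ → ℝ by R_l(x) = (g_{L-1} ∘ ⋯ ∘ g_{l+1})( f_l( (f_{l-1} ∘ ⋯ ∘ f₀)(x) ) ) − (g_{L-1} ∘ ⋯ ∘ g_{l+1})( g_l( (f_{l-1} ∘ ⋯ ∘ f₀)(x) ) ). Suppose there are constants C ≥ 0, a real grid size G₀ > 0, and integers 0 ≤ m ≤ k such that |R_l(x)| ≤ C · G₀^{-(k+1-m)} for every l and every x ∈ X₀. Then for every x ∈ X₀, |S(F(x)) − S(G(x))| ≤ (L·C/4) · G₀^{-(k+1-m)}, where S is the sigmoid function; that is, the sigmoid-composed network and its spline realization differ uniformly by at most a constant times G₀^{-k-1+m}. -/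

import Mathlib

/-- The sigmoid function `S(x) = 1/(1 + exp(-x))`. -/
noncomputable def sigmoid (x : ℝ) : ℝ := 1 / (1 + Real.exp (-x))

/-- Forward composition of a chain of maps `f l : X l → X (l+1)` applied `k` times
starting from layer `a`. The empty composition (`k = 0`) is the identity. -/
def comp {X : ℕ → Type*} (f : ∀ l, X l → X (l + 1)) : ∀ (k a : ℕ), X a → X (a + k)
  | 0, _, x => x
  | k + 1, a, x => f (a + k) (comp f k a x)

/-- Composition of the chain maps from layer `a` up to layer `L` (given `a ≤ L`). -/
def compTo {X : ℕ → Type*} (f : ∀ l, X l → X (l + 1)) (L a : ℕ) (h : a ≤ L)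
    (x : X a) : X L :=
  cast (congrArg X (Nat.add_sub_cancel' h)) (comp f (L - a) a x)

section aux
variable {X : ℕ → Type} (f : ∀ l, X l → X (l + 1))

lemma f_hcongr : ∀ {n n' : ℕ}, n = n' → ∀ {u : X n} {u' : X n'},
    HEq u u' → HEq (f n u) (f n' u') := by
  intro n n' h; subst h; intro u u' h2; rw [heq_iff_eq] at h2 ⊢; rw [h2]

lemma comp_hcongr : ∀ {n n' a : ℕ}, n = n' → ∀ (x : X a),
    HEq (comp f n a x) (comp f n' a x) := by
  intro n n' a h x; subst h; rfl

lemma comp_succ_left : ∀ (k a : ℕ) (x : X a),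
    HEq (comp f (k + 1) a x) (comp f k (a + 1) (f a x))
  | 0, a, x => HEq.refl _
  | k + 1, a, x => f_hcongr f (by omega) (comp_succ_left k a x)

lemma compTo_zero (L : ℕ) (y : X L) (h : L ≤ L) : compTo f L L h y = y := by
  have : HEq (compTo f L L h y) (comp f (L - L) L y) := cast_heq _ _
  rwa [Nat.sub_self, heq_iff_eq] at this

lemma compTo_succ {L a : ℕ} (hla : a < L) (y : X a) (h : a ≤ L) (h' : a + 1 ≤ L) :
    compTo f L a h y = compTo f L (a + 1) h' (f a y) := by
  have e : L - a = (L - (a + 1)) + 1 := by omega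
  have h1 : HEq (comp f (L - a) a y) (comp f (L - (a + 1)) (a + 1) (f a y)) :=
    (comp_hcongr f e y).trans (comp_succ_left f (L - (a + 1)) a y)
  have c1 : HEq (compTo f L a h y) (comp f (L - a) a y) := cast_heq _ _
  have c2 : HEq (compTo f L (a + 1) h' (f a y)) (comp f (L - (a + 1)) (a + 1) (f a y)) :=
    cast_heq _ _
  exact eq_of_heq (c1.trans (h1.trans c2.symm))

lemma compTo_zero_start (a : ℕ) (x : X 0) (h : (0:ℕ) ≤ 0) : compTo f 0 0 h x = x := by
  have : HEq (compTo f 0 0 h x) (comp f 0 0 x) := cast_heq _ _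
  rwa [heq_iff_eq] at this

lemma compTo_from_zero_succ (l : ℕ) (x : X 0) (h : (0:ℕ) ≤ l + 1) :
    compTo f (l + 1) 0 h x = f l (compTo f l 0 (Nat.zero_le l) x) := by
  have h1 : HEq (compTo f (l + 1) 0 h x) (comp f (l + 1) 0 x) := cast_heq _ _
  have h2 : HEq (compTo f l 0 (Nat.zero_le l) x) (comp f l 0 x) := cast_heq _ _
  have h3 : HEq (f l (compTo f l 0 (Nat.zero_le l) x)) (f (0 + l) (comp f l 0 x)) :=
    f_hcongr f (by omega) h2
  exact eq_of_heq (h1.trans h3.symm)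

end aux

lemma sigmoid_hasDerivAt (x : ℝ) :
    HasDerivAt sigmoid (Real.exp (-x) / (1 + Real.exp (-x)) ^ 2) x := by
  have h1 : HasDerivAt (fun y : ℝ => -y) (-1) x := (hasDerivAt_id x).neg
  have h2 := (Real.hasDerivAt_exp (-x)).comp x h1
  have h3 : HasDerivAt (fun y => 1 + Real.exp (-y)) (Real.exp (-x) * -1) x := by
    exact ((hasDerivAt_const x (1:ℝ)).add h2).congr_deriv (by ring)
  have hne : 1 + Real.exp (-x) ≠ 0 := by positivity
  have h4 := h3.inv hne
  have : sigmoid = fun y => (1 + Real.exp (-y))⁻¹ := by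
    funext y; simp [sigmoid, one_div]
  rw [this]
  exact h4.congr_deriv (by ring)

lemma sigmoid_lip (a b : ℝ) : |sigmoid a - sigmoid b| ≤ |a - b| / 4 := by
  have hderiv : ∀ y ∈ (Set.univ : Set ℝ),
      HasDerivWithinAt sigmoid (Real.exp (-y) / (1 + Real.exp (-y)) ^ 2) Set.univ y :=
    fun y _ => (sigmoid_hasDerivAt y).hasDerivWithinAt
  have hbound : ∀ y ∈ (Set.univ : Set ℝ),
      ‖Real.exp (-y) / (1 + Real.exp (-y)) ^ 2‖ ≤ 1/4 := by
    intro y _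
    have h := Real.exp_pos (-y)
    rw [Real.norm_eq_abs, abs_of_nonneg (by positivity)]
    rw [div_le_iff₀ (by positivity)]
    nlinarith [sq_nonneg (1 - Real.exp (-y))]
  have := Convex.norm_image_sub_le_of_norm_hasDerivWithin_le hderiv hbound
    convex_univ (Set.mem_univ b) (Set.mem_univ a)
  rw [Real.norm_eq_abs, Real.norm_eq_abs] at this
  linarith

/-- Conditional form of Theorem 1 (approximation bound for the KAN-based SCM):
for a chain `X 0, …, X L` with `X L = ℝ`, layer maps `f l, g l : X l → X (l+1)`
with full compositions `F = f_{L-1} ∘ ⋯ ∘ f 0`, `G = g_{L-1} ∘ ⋯ ∘ g 0` and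
per-layer residuals `R l`, if `|R l x| ≤ C * G₀ ^ (-(k + 1 - m))` for constants
`C ≥ 0`, grid size `G₀ > 0` and integers `0 ≤ m ≤ k`, then
`|S (F x) - S (G x)| ≤ (L * C / 4) * G₀ ^ (-(k + 1 - m))` for all `x ∈ X 0`. -/
theorem kan_scm_approximation_bound {X : ℕ → Type} (L : ℕ) (hne : ∀ l, Nonempty (X l))
    (hXL : X L = ℝ)
    (f g : ∀ l, X l → X (l + 1)) (R : ℕ → X 0 → ℝ)
    (hR : ∀ (l : ℕ) (hl : l < L) (x : X 0),
      R l x =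
        cast hXL (compTo g L (l + 1) (by omega) (f l (compTo f l 0 (Nat.zero_le l) x))) -
        cast hXL (compTo g L (l + 1) (by omega) (g l (compTo f l 0 (Nat.zero_le l) x))))
    (C G₀ : ℝ) (hC : 0 ≤ C) (hG₀ : 0 < G₀) (m k : ℕ) (hmk : m ≤ k)
    (hres : ∀ (l : ℕ) (hl : l < L) (x : X 0),
      |R l x| ≤ C * G₀ ^ (-((k : ℝ) + 1 - m))) :
    ∀ x : X 0,
      |sigmoid (cast hXL (compTo f L 0 (Nat.zero_le L) x)) -
          sigmoid (cast hXL (compTo g L 0 (Nat.zero_le L) x))| ≤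
        ((L : ℝ) * C / 4) * G₀ ^ (-((k : ℝ) + 1 - m)) := by
  intro x
  set B := G₀ ^ (-((k : ℝ) + 1 - m)) with hB
  have hBpos : 0 < B := Real.rpow_pos_of_pos hG₀ _
  -- hybrid values
  set v : ℕ → ℝ := fun l =>
    if h : l ≤ L then cast hXL (compTo g L l h (compTo f l 0 (Nat.zero_le l) x)) else 0
    with hv
  have hvL : v L = cast hXL (compTo f L 0 (Nat.zero_le L) x) := by
    rw [hv]; simp only [le_refl, dif_pos]
    rw [compTo_zero]
  have hv0 : v 0 = cast hXL (compTo g L 0 (Nat.zero_le L) x) := by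
    rw [hv]; simp only [Nat.zero_le, dif_pos]
    rw [compTo_zero_start f 0 x (le_refl 0)]
  have hstep : ∀ l, l < L → v (l + 1) - v l = R l x := by
    intro l hl
    rw [hv]
    simp only [dif_pos (by omega : l + 1 ≤ L), dif_pos (by omega : l ≤ L)]
    rw [hR l hl x]
    congr 2
    · rw [compTo_from_zero_succ]
    · exact compTo_succ g hl _ _ _
  have tele : v L - v 0 = ∑ l ∈ Finset.range L, (v (l + 1) - v l) :=
    (Finset.sum_range_sub v L).symm
  have hFG : |cast hXL (compTo f L 0 (Nat.zero_le L) x) -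
      cast hXL (compTo g L 0 (Nat.zero_le L) x)| ≤ (L : ℝ) * (C * B) := by
    rw [← hvL, ← hv0, tele]
    calc |∑ l ∈ Finset.range L, (v (l + 1) - v l)|
        ≤ ∑ l ∈ Finset.range L, |v (l + 1) - v l| := Finset.abs_sum_le_sum_abs _ _
      _ ≤ ∑ l ∈ Finset.range L, (C * B) := by
          apply Finset.sum_le_sum
          intro l hl
          rw [Finset.mem_range] at hl
          rw [hstep l hl]
          exact hres l hl x
      _ = (L : ℝ) * (C * B) := by rw [Finset.sum_const, Finset.card_range, nsmul_eq_mul]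
  calc |sigmoid (cast hXL (compTo f L 0 (Nat.zero_le L) x)) -
          sigmoid (cast hXL (compTo g L 0 (Nat.zero_le L) x))|
      ≤ |cast hXL (compTo f L 0 (Nat.zero_le L) x) -
          cast hXL (compTo g L 0 (Nat.zero_le L) x)| / 4 := sigmoid_lip _ _
    _ ≤ ((L : ℝ) * (C * B)) / 4 := by linarith [hFG]
    _ = ((L : ℝ) * C / 4) * B := by ring
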